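/- arXiv:1411.7120 — 8 statements merged into one kernel-verified Lean document; each statement's English description precedes it below -/
import Mathlib

section
/- Let {A_k} be a nonnegative sequence of real numbers satisfying A_k - A_{k+1} ≥ α A_{k+1}^2 for all k ≥ 0, where α > 0. Then for any k ≥ 2, A_k ≤ max{ (1/2)^((k-1)/2) A_0, 4/(α(k-1)) }. -/
/-! Each step either halves `A`, or else `A (k+1) > A k / 2`, and then the recursion makes
`1 / A` grow by at least `α / 2`. Among the first `k` steps, either at least `(k-1)/2` are
halvings, giving the geometric bound, or more than `(k+1)/2` are not, so
`1 / A k ≥ α (k-1) / 4`. -/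

theorem inv_add_half_le_inv_of_sq_le_sub {a b α : ℝ} (hα : 0 ≤ α) (hb : 0 < b) (hab : a / 2 < b)
    (hrec : α * b ^ 2 ≤ a - b) : a⁻¹ + α / 2 ≤ b⁻¹ := by
  have ha : 0 < a := by nlinarith [mul_nonneg hα (sq_nonneg b)]
  rw [inv_eq_one_div, inv_eq_one_div, div_add_div _ _ ha.ne' two_ne_zero,
    div_le_div_iff₀ (by positivity) hb]
  nlinarith [mul_le_mul_of_nonneg_left hab.le (mul_nonneg hα hb.le)]

namespace SqDecreasing

variable {A : ℕ → ℝ} {α : ℝ}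

theorem antitone (hα : 0 ≤ α) (hrec : ∀ k : ℕ, α * A (k + 1) ^ 2 ≤ A k - A (k + 1)) :
    Antitone A :=
  antitone_nat_of_succ_le fun k => by nlinarith [hrec k, sq_nonneg (A (k + 1))]

/-- `h` counts the steps up to `k` at which `A` was (at least) halved. -/
theorem exists_halvings (hα : 0 ≤ α) (hrec : ∀ k : ℕ, α * A (k + 1) ^ 2 ≤ A k - A (k + 1)) :
    ∀ k : ℕ, 0 < A k →
      ∃ h : ℕ, A k ≤ (1 / 2 : ℝ) ^ h * A 0 ∧ α * ((k : ℝ) - h) / 2 ≤ (A k)⁻¹ := by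
  intro k
  induction k with
  | zero => exact fun hpos => ⟨0, by simp, by simpa using hpos.le⟩
  | succ k ih =>
    intro hpos
    have hle : A (k + 1) ≤ A k := antitone hα hrec k.le_succ
    obtain ⟨h, hgeo, hinv⟩ := ih (hpos.trans_le hle)
    by_cases halved : A (k + 1) ≤ A k / 2
    · refine ⟨h + 1, by rw [pow_succ]; linarith, ?_⟩
      have := inv_anti₀ hpos hle
      push_cast
      linarith
    · have := inv_add_half_le_inv_of_sq_le_sub hα hpos (not_le.mp halved) (hrec k)
      refine ⟨h, hle.trans hgeo, ?_⟩
      push_cast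
      linarith

end SqDecreasing

theorem le_max_geometric_harmonic {x a α k : ℝ} {h : ℕ} (hα : 0 < α) (hk : 1 ≤ k - 1)
    (hx : 0 < x) (ha : 0 ≤ a) (hgeo : x ≤ (1 / 2 : ℝ) ^ h * a) (hinv : α * (k - h) / 2 ≤ x⁻¹) :
    x ≤ max ((1 / 2 : ℝ) ^ ((k - 1) / 2) * a) (4 / (α * (k - 1))) := by
  by_cases many : (k - 1) / 2 ≤ h
  · refine le_max_of_le_left (hgeo.trans (mul_le_mul_of_nonneg_right ?_ ha))
    rw [← Real.rpow_natCast]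
    exact Real.rpow_le_rpow_of_exponent_ge (by norm_num) (by norm_num) many
  · refine le_max_of_le_right ?_
    have : α * (k - 1) / 4 ≤ x⁻¹ := by nlinarith
    rw [le_inv_comm₀ (by positivity) hx] at this
    simpa [div_eq_mul_inv, mul_comm] using this

theorem stmt_0_general (A : ℕ → ℝ) (α : ℝ) (hα : 0 < α)
    (hrec : ∀ k : ℕ, α * (A (k + 1)) ^ 2 ≤ A k - A (k + 1)) :
    ∀ k : ℕ, 2 ≤ k →
      A k ≤ max (((1 : ℝ) / 2) ^ (((k : ℝ) - 1) / 2) * A 0) (4 / (α * ((k : ℝ) - 1))) := by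
  intro k hk
  have hk1 : (1 : ℝ) ≤ k - 1 := by
    have : (2 : ℝ) ≤ k := by exact_mod_cast hk
    linarith
  rcases le_or_gt (A k) 0 with hnonpos | hpos
  · exact le_max_of_le_right (hnonpos.trans (by positivity))
  obtain ⟨h, hgeo, hinv⟩ := SqDecreasing.exists_halvings hα.le hrec k hpos
  have hA0 : 0 ≤ A 0 := hpos.le.trans (SqDecreasing.antitone hα.le hrec k.zero_le)
  exact le_max_geometric_harmonic hα hk1 hpos hA0 hgeo hinv

/-- Lemma 4: a nonnegative real sequence with `A k - A (k+1) ≥ α A(k+1)²` satisfies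
`A k ≤ max ((1/2)^((k-1)/2) A 0) (4/(α (k-1)))` for `k ≥ 2`. -/
theorem stmt_0 (A : ℕ → ℝ) (α : ℝ) (hα : 0 < α) (hA : ∀ k, 0 ≤ A k)
    (hrec : ∀ k : ℕ, α * (A (k + 1)) ^ 2 ≤ A k - A (k + 1)) :
    ∀ k : ℕ, 2 ≤ k →
      A k ≤ max (((1 : ℝ) / 2) ^ (((k : ℝ) - 1) / 2) * A 0) (4 / (α * ((k : ℝ) - 1))) :=
  stmt_0_general A α hα hrec
end

section
/- Let h : ℝⁿ → ℝ be continuously differentiable with L_h-Lipschitz gradient, σ : ℝⁿ → (-∞,+∞] proper lower semicontinuous with inf σ > -∞, and fix t > L_h. For any u ∈ dom σ and u⁺ ∈ prox_t^σ(u - (1/t)∇h(u)), one has h(u⁺) + σ(u⁺) ≤ h(u) + σ(u) - ((t - L_h)/2)‖u⁺ - u‖². -/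
/-!
Expanding the square in the proximal inequality tested at `v = u` gives
`σ u⁺ + ⟪∇h u, u⁺ - u⟫ + t/2 ‖u⁺ - u‖² ≤ σ u`, while the descent lemma for an `L_h`-smooth
function gives `h u⁺ ≤ h u + ⟪∇h u, u⁺ - u⟫ + L_h/2 ‖u⁺ - u‖²`. Adding the two cancels the linear
terms.
-/

open RealInnerProductSpace

variable {E : Type*} [NormedAddCommGroup E] [InnerProductSpace ℝ E]

theorem sigma_add_inner_add_sq_le_of_prox {σ : E → ℝ} {g u v : E} {t : ℝ} (ht : t ≠ 0)
    (hprox : σ v + t / 2 * ‖v - (u - (1 / t) • g)‖ ^ 2 ≤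
      σ u + t / 2 * ‖u - (u - (1 / t) • g)‖ ^ 2) :
    σ v + ⟪g, v - u⟫ + t / 2 * ‖v - u‖ ^ 2 ≤ σ u := by
  rw [show v - (u - (1 / t) • g) = (v - u) + (1 / t) • g by abel,
    show u - (u - (1 / t) • g) = (1 / t) • g by abel,
    norm_add_sq_real, real_inner_smul_right, real_inner_comm] at hprox
  have hcancel : t / 2 * (2 * (1 / t * ⟪g, v - u⟫)) = ⟪g, v - u⟫ := by field_simp
  linarith

variable [CompleteSpace E] {f : E → ℝ}

theorem HasGradientAt.hasDerivAt_comp_add_smul {g u w : E} {s : ℝ}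
    (hf : HasGradientAt f g (u + s • w)) : HasDerivAt (fun s : ℝ => f (u + s • w)) ⟪g, w⟫ s := by
  have hline : HasDerivAt (fun s : ℝ => u + s • w) w s := by
    simpa using ((hasDerivAt_id s).smul_const w).const_add u
  have := hf.hasFDerivAt.comp_hasDerivAt s hline
  simp only [InnerProductSpace.toDual_apply_apply] at this
  exact this

theorem image_add_le_of_lipschitz_gradient {f' : E → E} {L : ℝ} (hf : ∀ x, HasGradientAt f (f' x) x)
    (hlip : ∀ x y, ‖f' x - f' y‖ ≤ L * ‖x - y‖) (u w : E) :
    f (u + w) ≤ f u + ⟪f' u, w⟫ + L / 2 * ‖w‖ ^ 2 := by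
  -- compare `s ↦ f (u + s • w)` on `[0, 1]` with the quadratic `B` through their derivatives
  set B : ℝ → ℝ := fun s => f u + s * ⟪f' u, w⟫ + L / 2 * s ^ 2 * ‖w‖ ^ 2
  have hB : ∀ s, HasDerivAt B (⟪f' u, w⟫ + L * s * ‖w‖ ^ 2) s := by
    intro s
    refine ((((hasDerivAt_id s).mul_const ⟪f' u, w⟫).const_add (f u)).add
      (((hasDerivAt_pow 2 s).const_mul (L / 2)).mul_const (‖w‖ ^ 2))).congr_deriv ?_
    simp only [Nat.cast_ofNat]
    ring
  have hF s := (hf (u + s • w)).hasDerivAt_comp_add_smul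
  have hderiv_le : ∀ s ∈ Set.Ico (0 : ℝ) 1,
      ⟪f' (u + s • w), w⟫ ≤ ⟪f' u, w⟫ + L * s * ‖w‖ ^ 2 := by
    rintro s ⟨hs, -⟩
    have : ⟪f' (u + s • w) - f' u, w⟫ ≤ L * s * ‖w‖ ^ 2 :=
      calc ⟪f' (u + s • w) - f' u, w⟫ ≤ ‖f' (u + s • w) - f' u‖ * ‖w‖ := real_inner_le_norm _ _
        _ ≤ L * ‖u + s • w - u‖ * ‖w‖ := by gcongr; exact hlip _ _
        _ = L * s * ‖w‖ ^ 2 := by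
          rw [add_sub_cancel_left, norm_smul, Real.norm_of_nonneg hs]
          ring
    rw [inner_sub_left] at this
    linarith
  have key := image_le_of_deriv_right_le_deriv_boundary
    (fun s _ => (hF s).continuousAt.continuousWithinAt) (fun s _ => (hF s).hasDerivWithinAt)
    (by simp [B]) (fun s _ => (hB s).continuousAt.continuousWithinAt)
    (fun s _ => (hB s).hasDerivWithinAt) hderiv_le (Set.right_mem_Icc.2 zero_le_one)
  simpa [B] using key

theorem stmt_4_general {n : ℕ} (h : EuclideanSpace ℝ (Fin n) → ℝ)
    (h' : EuclideanSpace ℝ (Fin n) → EuclideanSpace ℝ (Fin n)) (Lh : ℝ)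
    (hdiff : ∀ x, HasGradientAt h (h' x) x)
    (hlip : ∀ u v, ‖h' u - h' v‖ ≤ Lh * ‖u - v‖)
    (σ : EuclideanSpace ℝ (Fin n) → ℝ)
    (t : ℝ) (ht : Lh < t)
    (u uplus : EuclideanSpace ℝ (Fin n))
    (hprox : ∀ v, σ uplus + t / 2 * ‖uplus - (u - (1 / t) • h' u)‖ ^ 2 ≤
      σ v + t / 2 * ‖v - (u - (1 / t) • h' u)‖ ^ 2) :
    h uplus + σ uplus ≤ h u + σ u - (t - Lh) / 2 * ‖uplus - u‖ ^ 2 := by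
  rcases eq_or_ne uplus u with rfl | hne
  · simp
  have hLh : 0 ≤ Lh := nonneg_of_mul_nonneg_left ((norm_nonneg _).trans (hlip uplus u))
    (norm_pos_iff.2 (sub_ne_zero.2 hne))
  have hdesc := image_add_le_of_lipschitz_gradient hdiff hlip u (uplus - u)
  rw [add_sub_cancel] at hdesc
  have hstep := sigma_add_inner_add_sq_le_of_prox (hLh.trans_lt ht).ne' (hprox u)
  linarith

/-- Lemma 3 (sufficient decrease of the proximal gradient step): if `∇h` is `L_h`-Lipschitz,
`σ` is lsc and bounded below, `t > L_h`, and `u⁺` minimizes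
`v ↦ σ v + (t/2)‖v - (u - (1/t)∇h(u))‖²`, then
`h u⁺ + σ u⁺ ≤ h u + σ u - ((t - L_h)/2)‖u⁺ - u‖²`. -/
theorem stmt_4 {n : ℕ} (h : EuclideanSpace ℝ (Fin n) → ℝ)
    (h' : EuclideanSpace ℝ (Fin n) → EuclideanSpace ℝ (Fin n)) (Lh : ℝ)
    (hdiff : ∀ x, HasGradientAt h (h' x) x)
    (hlip : ∀ u v, ‖h' u - h' v‖ ≤ Lh * ‖u - v‖)
    (σ : EuclideanSpace ℝ (Fin n) → ℝ)
    (hlsc : LowerSemicontinuous σ) (hbdd : BddBelow (Set.range σ))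
    (t : ℝ) (ht : Lh < t)
    (u uplus : EuclideanSpace ℝ (Fin n))
    (hprox : ∀ v, σ uplus + t / 2 * ‖uplus - (u - (1 / t) • h' u)‖ ^ 2 ≤
      σ v + t / 2 * ‖v - (u - (1 / t) • h' u)‖ ^ 2) :
    h uplus + σ uplus ≤ h u + σ u - (t - Lh) / 2 * ‖uplus - u‖ ^ 2 :=
  stmt_4_general h h' Lh hdiff hlip σ t ht u uplus hprox
end

section
/- Suppose a sequence {z^k} and a function Ψ with optimal value Ψ* satisfy: (a) Ψ(z^k) - Ψ(z^{k+1}) ≥ τ₁·d(z^k, z^{k+1})² for all k, and (b) Ψ(z^{k+1}) - Ψ* ≤ τ₂·d(z^k, z^{k+1}) for all k, where τ₁, τ₂ > 0, d is a nonnegative function, and Ψ(z^k) ≥ Ψ* for all k. Then with α = τ₁/τ₂², the sequence A_k = Ψ(z^k) - Ψ* satisfies A_k - A_{k+1} ≥ α A_{k+1}² for all k, and consequently Ψ(z^k) - Ψ* ≤ max{ (1/2)^((k-1)/2)(Ψ(z^0) - Ψ*), 4τ₂²/(τ₁(k-1)) } for all k ≥ 2. -/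
/-!
With `A k = Ψ (z k) - Ψ*`, squaring (b) and inserting (a) gives `α A_{k+1}² ≤ A_k - A_{k+1}`.
Along the iterates, each step either halves `A`, or keeps `A_{k+1} > A_k / 2`; in the latter
case the recursion shows that `α A_k (k - m) ≤ 2` survives with `k` increased by one, where `m`
counts the halving steps so far. After `k` steps either `m ≥ (k - 1) / 2`, giving the
geometric bound, or `k - m > (k - 1) / 2`, giving the `O(1/k)` bound.
-/

theorem mul_sq_le_sq_mul_sub_of_sufficient_decrease {τ₁ τ₂ a a' δ : ℝ} (hτ₁ : 0 ≤ τ₁)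
    (ha' : 0 ≤ a') (hdecr : τ₁ * δ ^ 2 ≤ a - a') (herr : a' ≤ τ₂ * δ) :
    τ₁ * a' ^ 2 ≤ τ₂ ^ 2 * (a - a') :=
  calc τ₁ * a' ^ 2 ≤ τ₁ * (τ₂ * δ) ^ 2 := by gcongr
    _ = τ₂ ^ 2 * (τ₁ * δ ^ 2) := by ring
    _ ≤ τ₂ ^ 2 * (a - a') := by gcongr

section Rate

variable {α : ℝ} {A : ℕ → ℝ}

theorem antitone_of_mul_sq_le_sub (hα : 0 < α)
    (hrec : ∀ k, α * A (k + 1) ^ 2 ≤ A k - A (k + 1)) : Antitone A :=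
  antitone_nat_of_succ_le fun k => by nlinarith [hrec k, sq_nonneg (A (k + 1))]

/-- Since `a < 2 a'`, the increment `α a' a` is below `2 α a'² ≤ 2 (a - a')`, which is exactly
the room gained by replacing `a` with `a'` in `α a t ≤ 2`. -/
theorem mul_mul_add_one_le_two_of_half_lt {a a' t : ℝ} (hα : 0 < α)
    (hhalf : a / 2 < a') (hrec : α * a' ^ 2 ≤ a - a') (hbound : α * a * t ≤ 2) :
    α * a' * (t + 1) ≤ 2 := by
  have ha' : 0 < a' := by nlinarith [sq_nonneg a']
  have hle : a' ≤ a := by nlinarith [sq_nonneg a']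
  have ha : 0 < a := by linarith
  rw [← mul_le_mul_iff_of_pos_left ha]
  nlinarith [mul_le_mul_of_nonneg_right hbound ha'.le,
    mul_nonneg (mul_nonneg hα.le ha'.le) (by linarith : (0 : ℝ) ≤ 2 * a' - a)]

theorem exists_halvings_and_harmonic_bound (hα : 0 < α)
    (hrec : ∀ k, α * A (k + 1) ^ 2 ≤ A k - A (k + 1)) (k : ℕ) :
    ∃ m ≤ k, A k ≤ (1 / 2 : ℝ) ^ m * A 0 ∧ α * A k * ((k : ℝ) - m) ≤ 2 := by
  induction k with
  | zero => exact ⟨0, le_rfl, by simp, by simp⟩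
  | succ k ih =>
    obtain ⟨m, hmk, hgeom, hharm⟩ := ih
    have hmono := antitone_of_mul_sq_le_sub hα hrec (Nat.le_succ k)
    have hkm : (0 : ℝ) ≤ k - m := sub_nonneg.2 (by exact_mod_cast hmk)
    by_cases hhalf : A (k + 1) ≤ A k / 2
    · refine ⟨m + 1, by omega, ?_, ?_⟩
      · rw [pow_succ]
        linarith
      · push_cast
        have : α * A (k + 1) * ((k : ℝ) - m) ≤ α * A k * ((k : ℝ) - m) := by gcongr
        linarith
    · refine ⟨m, by omega, hmono.trans hgeom, ?_⟩
      have := mul_mul_add_one_le_two_of_half_lt hα (not_le.1 hhalf) (hrec k) hharm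
      push_cast
      linarith

theorem le_max_geometric_harmonic_of_mul_sq_le_sub (hα : 0 < α) (hA : ∀ k, 0 ≤ A k)
    (hrec : ∀ k, α * A (k + 1) ^ 2 ≤ A k - A (k + 1)) {k : ℕ} (hk : 2 ≤ k) :
    A k ≤ max ((1 / 2 : ℝ) ^ (((k : ℝ) - 1) / 2) * A 0) (4 / (α * ((k : ℝ) - 1))) := by
  obtain ⟨m, -, hgeom, hharm⟩ := exists_halvings_and_harmonic_bound hα hrec k
  have hk1 : (1 : ℝ) < k := by exact_mod_cast hk
  by_cases hm : ((k : ℝ) - 1) / 2 ≤ m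
  · refine le_max_of_le_left (hgeom.trans ?_)
    rw [← Real.rpow_natCast]
    exact mul_le_mul_of_nonneg_right
      (Real.rpow_le_rpow_of_exponent_ge (by norm_num) (by norm_num) hm) (hA 0)
  · refine le_max_of_le_right ?_
    rw [le_div_iff₀ (by nlinarith)]
    nlinarith [mul_nonneg hα.le (hA k)]

end Rate

theorem stmt_5_general {N : Type*} (z : ℕ → N) (Ψ : N → ℝ) (Ψstar : ℝ)
    (d : N → N → ℝ) (τ₁ τ₂ : ℝ) (hτ₁ : 0 < τ₁) (hτ₂ : 0 < τ₂)
    (hlb : ∀ k, Ψstar ≤ Ψ (z k))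
    (ha : ∀ k : ℕ, τ₁ * (d (z k) (z (k + 1))) ^ 2 ≤ Ψ (z k) - Ψ (z (k + 1)))
    (hb : ∀ k : ℕ, Ψ (z (k + 1)) - Ψstar ≤ τ₂ * d (z k) (z (k + 1))) :
    (∀ k : ℕ, τ₁ / τ₂ ^ 2 * (Ψ (z (k + 1)) - Ψstar) ^ 2 ≤
        (Ψ (z k) - Ψstar) - (Ψ (z (k + 1)) - Ψstar)) ∧
      ∀ k : ℕ, 2 ≤ k → Ψ (z k) - Ψstar ≤
        max (((1 : ℝ) / 2) ^ (((k : ℝ) - 1) / 2) * (Ψ (z 0) - Ψstar))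
          (4 * τ₂ ^ 2 / (τ₁ * ((k : ℝ) - 1))) := by
  have hrec : ∀ k : ℕ, τ₁ / τ₂ ^ 2 * (Ψ (z (k + 1)) - Ψstar) ^ 2 ≤
      (Ψ (z k) - Ψstar) - (Ψ (z (k + 1)) - Ψstar) := fun k => by
    rw [div_mul_eq_mul_div, div_le_iff₀ (by positivity), mul_comm _ (τ₂ ^ 2)]
    exact mul_sq_le_sq_mul_sub_of_sufficient_decrease hτ₁.le (sub_nonneg.2 (hlb (k + 1)))
      (by linarith [ha k]) (hb k)
  refine ⟨hrec, fun k hk => ?_⟩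
  have hrate := le_max_geometric_harmonic_of_mul_sq_le_sub (div_pos hτ₁ (by positivity))
    (fun k => sub_nonneg.2 (hlb k)) hrec hk
  rwa [div_mul_eq_mul_div, div_div_eq_mul_div] at hrate

/-- The theoretical framework: properties (a) and (b) give the recursion
`A_k - A_{k+1} ≥ α A_{k+1}²` with `α = τ₁/τ₂²` for `A_k = Ψ(z^k) - Ψ*`,
and consequently the sublinear rate of convergence. -/
theorem stmt_5 {N : Type*} (z : ℕ → N) (Ψ : N → ℝ) (Ψstar : ℝ)
    (d : N → N → ℝ) (τ₁ τ₂ : ℝ) (hτ₁ : 0 < τ₁) (hτ₂ : 0 < τ₂)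
    (hd : ∀ a b, 0 ≤ d a b)
    (hlb : ∀ k, Ψstar ≤ Ψ (z k))
    (ha : ∀ k : ℕ, τ₁ * (d (z k) (z (k + 1))) ^ 2 ≤ Ψ (z k) - Ψ (z (k + 1)))
    (hb : ∀ k : ℕ, Ψ (z (k + 1)) - Ψstar ≤ τ₂ * d (z k) (z (k + 1))) :
    (∀ k : ℕ, τ₁ / τ₂ ^ 2 * (Ψ (z (k + 1)) - Ψstar) ^ 2 ≤
        (Ψ (z k) - Ψstar) - (Ψ (z (k + 1)) - Ψstar)) ∧
      ∀ k : ℕ, 2 ≤ k → Ψ (z k) - Ψstar ≤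
        max (((1 : ℝ) / 2) ^ (((k : ℝ) - 1) / 2) * (Ψ (z 0) - Ψstar))
          (4 * τ₂ ^ 2 / (τ₁ * ((k : ℝ) - 1))) :=
  stmt_5_general z Ψ Ψstar d τ₁ τ₂ hτ₁ hτ₂ hlb ha hb
end

section
/- Under AM-variant-I, if y^{k+1} minimizes y ↦ H(x^{k+1}, y) + g(y), then combining with the x-update step (c_k = γ L₁(y^k), γ > 1) gives Ψ(z^k) - Ψ(z^{k+1}) ≥ ((γ-1)λ₁⁻/2)‖x^{k+1} - x^k‖², where Ψ(x,y) = f(x) + H(x,y) + g(y) and λ₁⁻ ≤ L₁(y^k) for all k. -/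
/-!
Comparing the prox step with its value at `xᵏ` gives
`f(xᵏ⁺¹) + ⟪∇ₓH(xᵏ, yᵏ), xᵏ⁺¹ - xᵏ⟫ + (c/2)‖xᵏ⁺¹ - xᵏ‖² ≤ f(xᵏ)`, the descent lemma for the
`L₁`-smooth function `H(·, yᵏ)` gives
`H(xᵏ⁺¹, yᵏ) ≤ H(xᵏ, yᵏ) + ⟪∇ₓH(xᵏ, yᵏ), xᵏ⁺¹ - xᵏ⟫ + (L₁/2)‖xᵏ⁺¹ - xᵏ‖²`, and the `y`-step gives
`H(xᵏ⁺¹, yᵏ⁺¹) + g(yᵏ⁺¹) ≤ H(xᵏ⁺¹, yᵏ) + g(yᵏ)`. Adding the three, the linear terms cancel and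
what remains is `((c - L₁)/2)‖xᵏ⁺¹ - xᵏ‖²` with `c - L₁ = (γ - 1)L₁ ≥ (γ - 1)λ₁⁻`.
-/

open RealInnerProductSpace

section

variable {E : Type*} [NormedAddCommGroup E] [InnerProductSpace ℝ E]

theorem add_inner_add_half_mul_sq_le_of_prox {f : E → ℝ} {c : ℝ} (hc : c ≠ 0) {x a v : E}
    (hprox : f a + c / 2 * ‖a - (x - (1 / c) • v)‖ ^ 2 ≤
      f x + c / 2 * ‖x - (x - (1 / c) • v)‖ ^ 2) :
    f a + ⟪v, a - x⟫ + c / 2 * ‖a - x‖ ^ 2 ≤ f x := by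
  have hexpand : c / 2 * ‖a - (x - (1 / c) • v)‖ ^ 2 =
      c / 2 * ‖x - (x - (1 / c) • v)‖ ^ 2 + ⟪v, a - x⟫ + c / 2 * ‖a - x‖ ^ 2 := by
    rw [show a - (x - (1 / c) • v) = (a - x) + (1 / c) • v by abel, sub_sub_cancel,
      norm_add_sq_real, real_inner_smul_right, real_inner_comm]
    field_simp
    ring
  linarith

variable [CompleteSpace E]

theorem HasGradientAt.hasDerivAt_comp_add_smul_s7 {φ : E → ℝ} {φ' x d : E} {t : ℝ}
    (h : HasGradientAt φ φ' (x + t • d)) :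
    HasDerivAt (fun s : ℝ => φ (x + s • d)) ⟪φ', d⟫ t := by
  have hline : HasDerivAt (fun s : ℝ => x + s • d) d t := by
    simpa using ((hasDerivAt_id t).smul_const d).const_add x
  exact h.hasFDerivAt.comp_hasDerivAt t hline

/-- The descent lemma. -/
theorem le_add_inner_add_sq_of_lipschitz_gradient {φ : E → ℝ} {φ' : E → E} {L : ℝ}
    (hφ : ∀ x, HasGradientAt φ (φ' x) x) (hφ' : ∀ x₁ x₂, ‖φ' x₁ - φ' x₂‖ ≤ L * ‖x₁ - x₂‖)
    (x y : E) :
    φ y ≤ φ x + ⟪φ' x, y - x⟫ + L / 2 * ‖y - x‖ ^ 2 := by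
  set d := y - x
  have hψ (t : ℝ) : HasDerivAt (fun s : ℝ => φ (x + s • d) - s * ⟪φ' x, d⟫)
      (⟪φ' (x + t • d), d⟫ - ⟪φ' x, d⟫) t :=
    (hφ _).hasDerivAt_comp_add_smul_s7.sub (hasDerivAt_mul_const ⟪φ' x, d⟫)
  have hB (t : ℝ) : HasDerivAt (fun s : ℝ => φ x + L / 2 * ‖d‖ ^ 2 * s ^ 2)
      (L * ‖d‖ ^ 2 * t) t :=
    (((hasDerivAt_pow 2 t).const_mul (L / 2 * ‖d‖ ^ 2)).const_add (φ x)).congr_deriv (by ring)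
  have hbound (t : ℝ) (ht : 0 ≤ t) :
      ⟪φ' (x + t • d), d⟫ - ⟪φ' x, d⟫ ≤ L * ‖d‖ ^ 2 * t :=
    calc ⟪φ' (x + t • d), d⟫ - ⟪φ' x, d⟫ = ⟪φ' (x + t • d) - φ' x, d⟫ := (inner_sub_left ..).symm
      _ ≤ ‖φ' (x + t • d) - φ' x‖ * ‖d‖ := real_inner_le_norm _ _
      _ ≤ L * ‖x + t • d - x‖ * ‖d‖ := by gcongr; exact hφ' _ _
      _ = L * ‖d‖ ^ 2 * t := by
        rw [add_sub_cancel_left, norm_smul, Real.norm_of_nonneg ht]; ring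
  have key := image_le_of_deriv_right_le_deriv_boundary
    (fun t _ => (hψ t).continuousAt.continuousWithinAt) (fun t _ => (hψ t).hasDerivWithinAt)
    (by simp) (fun t _ => (hB t).continuousAt.continuousWithinAt)
    (fun t _ => (hB t).hasDerivWithinAt) (fun t ht => hbound t ht.1)
    (Set.right_mem_Icc.2 zero_le_one)
  have hy : x + (1 : ℝ) • d = y := by simp [d]
  simp only [hy, one_mul, one_pow, mul_one] at key
  linarith

end

theorem stmt_7_general {n₁ n₂ : ℕ}
    (f : EuclideanSpace ℝ (Fin n₁) → ℝ)
    (g : EuclideanSpace ℝ (Fin n₂) → ℝ)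
    (H : EuclideanSpace ℝ (Fin n₁) → EuclideanSpace ℝ (Fin n₂) → ℝ)
    (Hx' : EuclideanSpace ℝ (Fin n₁) → EuclideanSpace ℝ (Fin n₂) → EuclideanSpace ℝ (Fin n₁))
    (yk : EuclideanSpace ℝ (Fin n₂))
    (hdiff : ∀ x, HasGradientAt (fun x => H x yk) (Hx' x yk) x)
    (L₁ lam₁ : ℝ) (hlam : 0 < lam₁) (hlamL : lam₁ ≤ L₁)
    (hlip : ∀ x₁ x₂, ‖Hx' x₁ yk - Hx' x₂ yk‖ ≤ L₁ * ‖x₁ - x₂‖)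
    (γ c : ℝ) (hγ : 1 < γ) (hc : c = γ * L₁)
    (xk xk1 : EuclideanSpace ℝ (Fin n₁)) (yk1 : EuclideanSpace ℝ (Fin n₂))
    (hprox : ∀ u, f xk1 + c / 2 * ‖xk1 - (xk - (1 / c) • Hx' xk yk)‖ ^ 2 ≤
      f u + c / 2 * ‖u - (xk - (1 / c) • Hx' xk yk)‖ ^ 2)
    (hymin : ∀ y, H xk1 yk1 + g yk1 ≤ H xk1 y + g y) :
    (γ - 1) * lam₁ / 2 * ‖xk1 - xk‖ ^ 2 ≤
      (f xk + H xk yk + g yk) - (f xk1 + H xk1 yk1 + g yk1) := by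
  have hc0 : c ≠ 0 := by rw [hc]; nlinarith
  have hf_step := add_inner_add_half_mul_sq_le_of_prox hc0 (hprox xk)
  have hH_step := le_add_inner_add_sq_of_lipschitz_gradient hdiff hlip xk xk1
  have hy_step := hymin yk
  have hgap : (γ - 1) * lam₁ / 2 * ‖xk1 - xk‖ ^ 2 ≤ (c - L₁) / 2 * ‖xk1 - xk‖ ^ 2 := by
    rw [hc]
    gcongr
    nlinarith
  linarith

/-- Step 1 of Theorem 1 (AM-variant-I): combining the proximal-linearized `x`-update
(`c_k = γ L₁(y^k)`, `γ > 1`) with the exact `y`-minimization gives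
`Ψ(z^k) - Ψ(z^{k+1}) ≥ ((γ-1) λ₁⁻ / 2) ‖x^{k+1} - x^k‖²`. -/
theorem stmt_7 {n₁ n₂ : ℕ}
    (f : EuclideanSpace ℝ (Fin n₁) → ℝ)
    (hfconv : ConvexOn ℝ Set.univ f) (hflsc : LowerSemicontinuous f)
    (hfbdd : BddBelow (Set.range f))
    (g : EuclideanSpace ℝ (Fin n₂) → ℝ)
    (hgconv : ConvexOn ℝ Set.univ g) (hglsc : LowerSemicontinuous g)
    (hgbdd : BddBelow (Set.range g))
    (H : EuclideanSpace ℝ (Fin n₁) → EuclideanSpace ℝ (Fin n₂) → ℝ)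
    (hHconv : ConvexOn ℝ Set.univ (fun p : EuclideanSpace ℝ (Fin n₁) × EuclideanSpace ℝ (Fin n₂) => H p.1 p.2))
    (Hx' : EuclideanSpace ℝ (Fin n₁) → EuclideanSpace ℝ (Fin n₂) → EuclideanSpace ℝ (Fin n₁))
    (yk : EuclideanSpace ℝ (Fin n₂))
    (hdiff : ∀ x, HasGradientAt (fun x => H x yk) (Hx' x yk) x)
    (L₁ lam₁ : ℝ) (hlam : 0 < lam₁) (hlamL : lam₁ ≤ L₁)
    (hlip : ∀ x₁ x₂, ‖Hx' x₁ yk - Hx' x₂ yk‖ ≤ L₁ * ‖x₁ - x₂‖)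
    (γ c : ℝ) (hγ : 1 < γ) (hc : c = γ * L₁)
    (xk xk1 : EuclideanSpace ℝ (Fin n₁)) (yk1 : EuclideanSpace ℝ (Fin n₂))
    (hprox : ∀ u, f xk1 + c / 2 * ‖xk1 - (xk - (1 / c) • Hx' xk yk)‖ ^ 2 ≤
      f u + c / 2 * ‖u - (xk - (1 / c) • Hx' xk yk)‖ ^ 2)
    (hymin : ∀ y, H xk1 yk1 + g yk1 ≤ H xk1 y + g y) :
    (γ - 1) * lam₁ / 2 * ‖xk1 - xk‖ ^ 2 ≤
      (f xk + H xk yk + g yk) - (f xk1 + H xk1 yk1 + g yk1) :=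
  stmt_7_general f g H Hx' yk hdiff L₁ lam₁ hlam hlamL hlip γ c hγ hc xk xk1 yk1 hprox hymin
end

section
/- For AM-variant-II with updates x^{k+1} = prox_{c_k}^f(x^k - (1/c_k)∇_x H(x^k,y^k)) and y^{k+1} = prox_{d_k}^g(y^k - (1/d_k)∇_y H(x^k,y^k)), with H convex with L₅-Lipschitz gradient, c_k = γL₁(y^k) ≥ γλ₁⁻, d_k = γL₂(x^k) ≥ γλ₂⁻, η = min{λ₁⁻/2, λ₂⁻/2} and γ > L₅/η, we have Ψ(z^k) - Ψ(z^{k+1}) ≥ (γη - L₅)‖z^{k+1} - z^k‖², where z^k = (x^k, y^k) and Ψ(x,y) = f(x) + H(x,y) + g(y). -/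
open RealInnerProductSpace

lemma descent_lemma {F : Type*} [NormedAddCommGroup F] [InnerProductSpace ℝ F] [CompleteSpace F]
    (H : F → ℝ) (H' : F → F) (hdiff : ∀ z, HasGradientAt H (H' z) z)
    (L : ℝ) (hlip : ∀ z w, ‖H' z - H' w‖ ≤ L * ‖z - w‖) (z w : F) :
    H w ≤ H z + ⟪H' z, w - z⟫ + L / 2 * ‖w - z‖ ^ 2 := by
  set v := w - z with hv
  set φ : ℝ → ℝ := fun t => L * ‖v‖ ^ 2 / 2 * t ^ 2 + ⟪H' z, v⟫ * t - H (z + t • v) with hφ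
  have hder : ∀ t : ℝ, HasDerivAt φ (L * ‖v‖ ^ 2 * t + ⟪H' z, v⟫ - ⟪H' (z + t • v), v⟫) t := by
    intro t
    have h1 : HasDerivAt (fun t : ℝ => z + t • v) v t := by
      simpa using ((hasDerivAt_id t).smul_const v).const_add z
    have h2 : HasDerivAt (fun t : ℝ => H (z + t • v)) ⟪H' (z + t • v), v⟫ t := by
      have := ((hdiff (z + t • v)).hasFDerivAt.comp_hasDerivAt t h1)
      simp [InnerProductSpace.toDual_apply_apply] at this
      exact this
    have h3 : HasDerivAt (fun t : ℝ => L * ‖v‖ ^ 2 / 2 * t ^ 2 + ⟪H' z, v⟫ * t)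
        (L * ‖v‖ ^ 2 * t + ⟪H' z, v⟫) t := by
      have ha : HasDerivAt (fun t : ℝ => L * ‖v‖ ^ 2 / 2 * t ^ 2)
          (L * ‖v‖ ^ 2 * t) t := by
        have h := (hasDerivAt_pow 2 t).const_mul (L * ‖v‖ ^ 2 / 2)
        exact h.congr_deriv (by push_cast; ring)
      have hb : HasDerivAt (fun t : ℝ => ⟪H' z, v⟫ * t) ⟪H' z, v⟫ t := by
        simpa using (hasDerivAt_id t).const_mul ⟪H' z, v⟫
      exact ha.add hb
    exact h3.sub h2
  have hmono : MonotoneOn φ (Set.Icc (0:ℝ) 1) := by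
    apply monotoneOn_of_deriv_nonneg (convex_Icc 0 1)
    · exact fun t _ => (hder t).continuousAt.continuousWithinAt
    · exact fun t _ => ((hder t).differentiableAt).differentiableWithinAt
    · intro t ht
      rw [(hder t).deriv]
      have ht0 : 0 ≤ t := by
        rcases (Set.mem_Icc.mp (interior_subset ht)) with ⟨h0, _⟩; exact h0
      have h4 : ⟪H' (z + t • v), v⟫ - ⟪H' z, v⟫ ≤ L * ‖v‖ ^ 2 * t := by
        calc ⟪H' (z + t • v), v⟫ - ⟪H' z, v⟫ = ⟪H' (z + t • v) - H' z, v⟫ := by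
              rw [inner_sub_left]
          _ ≤ ‖H' (z + t • v) - H' z‖ * ‖v‖ := real_inner_le_norm _ _
          _ ≤ (L * ‖(z + t • v) - z‖) * ‖v‖ := by
              have := hlip (z + t • v) z
              exact mul_le_mul_of_nonneg_right this (norm_nonneg _)
          _ = L * ‖v‖ ^ 2 * t := by
              simp [norm_smul, Real.norm_eq_abs, abs_of_nonneg ht0]; ring
      linarith
  have h01 : φ 0 ≤ φ 1 := hmono (by norm_num) (by norm_num) (by norm_num)
  have : φ 0 = -H z := by simp [hφ]
  have h1 : φ 1 = L * ‖v‖ ^ 2 / 2 + ⟪H' z, v⟫ - H w := by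
    simp [hφ, hv]
  rw [this, h1] at h01
  nlinarith [h01]

/-- Step 1 of Theorem 2 (AM-variant-II): sufficient decrease
`Ψ(z^k) - Ψ(z^{k+1}) ≥ (γη - L₅)‖z^{k+1} - z^k‖²`. -/
theorem stmt_9 {n₁ n₂ : ℕ}
    (f : EuclideanSpace ℝ (Fin n₁) → ℝ)
    (hfconv : ConvexOn ℝ Set.univ f) (hflsc : LowerSemicontinuous f)
    (hfbdd : BddBelow (Set.range f))
    (g : EuclideanSpace ℝ (Fin n₂) → ℝ)
    (hgconv : ConvexOn ℝ Set.univ g) (hglsc : LowerSemicontinuous g)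
    (hgbdd : BddBelow (Set.range g))
    (H : WithLp 2 (EuclideanSpace ℝ (Fin n₁) × EuclideanSpace ℝ (Fin n₂)) → ℝ)
    (hHconv : ConvexOn ℝ Set.univ H)
    (H' : WithLp 2 (EuclideanSpace ℝ (Fin n₁) × EuclideanSpace ℝ (Fin n₂)) →
      WithLp 2 (EuclideanSpace ℝ (Fin n₁) × EuclideanSpace ℝ (Fin n₂)))
    (hdiff : ∀ z, HasGradientAt H (H' z) z)
    (L₅ : ℝ) (hL₅lip : ∀ z w, ‖H' z - H' w‖ ≤ L₅ * ‖z - w‖)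
    (lam₁ lam₂ η γ c d : ℝ) (hlam₁ : 0 < lam₁) (hlam₂ : 0 < lam₂)
    (hη : η = min lam₁ lam₂ / 2) (hγ : L₅ / η < γ)
    (hc : γ * lam₁ ≤ c) (hd : γ * lam₂ ≤ d)
    (xk xk1 : EuclideanSpace ℝ (Fin n₁)) (yk yk1 : EuclideanSpace ℝ (Fin n₂))
    (zk zk1 : WithLp 2 (EuclideanSpace ℝ (Fin n₁) × EuclideanSpace ℝ (Fin n₂)))
    (hzk : zk = WithLp.toLp 2 (xk, yk)) (hzk1 : zk1 = WithLp.toLp 2 (xk1, yk1))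
    (hproxx : ∀ u, f xk1 + c / 2 * ‖xk1 - (xk - (1 / c) • (H' zk).ofLp.1)‖ ^ 2 ≤
      f u + c / 2 * ‖u - (xk - (1 / c) • (H' zk).ofLp.1)‖ ^ 2)
    (hproxy : ∀ v, g yk1 + d / 2 * ‖yk1 - (yk - (1 / d) • (H' zk).ofLp.2)‖ ^ 2 ≤
      g v + d / 2 * ‖v - (yk - (1 / d) • (H' zk).ofLp.2)‖ ^ 2) :
    (γ * η - L₅) * ‖zk1 - zk‖ ^ 2 ≤
      (f xk + H zk + g yk) - (f xk1 + H zk1 + g yk1) := by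
  have hηpos : 0 < η := by
    rw [hη]; positivity
  by_cases hzz : zk1 = zk
  · rw [hzk, hzk1] at hzz
    have h1 : xk1 = xk := congrArg (fun z => z.ofLp.1) hzz
    have h2 : yk1 = yk := congrArg (fun z => z.ofLp.2) hzz
    rw [hzk, hzk1, hzz, h1, h2]
    simp
  -- nondegenerate case
  have hzpos : 0 < ‖zk1 - zk‖ := by
    rw [norm_pos_iff]
    exact sub_ne_zero.mpr hzz
  have hL₅0 : 0 ≤ L₅ := by
    have h1 := hL₅lip zk1 zk
    have h2 : (0:ℝ) ≤ ‖H' zk1 - H' zk‖ := norm_nonneg _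
    nlinarith
  have hγpos : 0 < γ := lt_of_le_of_lt (by positivity) hγ
  have hcpos : 0 < c := lt_of_lt_of_le (by positivity) hc
  have hdpos : 0 < d := lt_of_lt_of_le (by positivity) hd
  set p := (H' zk).ofLp.1 with hp
  set q := (H' zk).ofLp.2 with hq
  -- prox inequality for x
  have key1 : f xk1 + c / 2 * ‖xk1 - xk‖ ^ 2 + ⟪xk1 - xk, p⟫ ≤ f xk := by
    have h := hproxx xk
    have e1 : xk1 - (xk - (1 / c) • p) = (xk1 - xk) + (1 / c) • p := by abel
    have e2 : xk - (xk - (1 / c) • p) = (1 / c) • p := by abel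
    rw [e1, e2, norm_add_sq_real, real_inner_smul_right] at h
    have e3 : c / 2 * (‖xk1 - xk‖ ^ 2 + 2 * (1 / c * ⟪xk1 - xk, p⟫) + ‖(1 / c) • p‖ ^ 2)
        = c / 2 * ‖xk1 - xk‖ ^ 2 + ⟪xk1 - xk, p⟫ + c / 2 * ‖(1 / c) • p‖ ^ 2 := by
      field_simp
    rw [e3] at h
    linarith
  have key2 : g yk1 + d / 2 * ‖yk1 - yk‖ ^ 2 + ⟪yk1 - yk, q⟫ ≤ g yk := by
    have h := hproxy yk
    have e1 : yk1 - (yk - (1 / d) • q) = (yk1 - yk) + (1 / d) • q := by abel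
    have e2 : yk - (yk - (1 / d) • q) = (1 / d) • q := by abel
    rw [e1, e2, norm_add_sq_real, real_inner_smul_right] at h
    have e3 : d / 2 * (‖yk1 - yk‖ ^ 2 + 2 * (1 / d * ⟪yk1 - yk, q⟫) + ‖(1 / d) • q‖ ^ 2)
        = d / 2 * ‖yk1 - yk‖ ^ 2 + ⟪yk1 - yk, q⟫ + d / 2 * ‖(1 / d) • q‖ ^ 2 := by
      field_simp
    rw [e3] at h
    linarith
  -- descent lemma
  have key3 := descent_lemma H H' hdiff L₅ hL₅lip zk zk1
  have hfst : (zk1 - zk).ofLp.1 = xk1 - xk := by rw [hzk, hzk1]; rfl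
  have hsnd : (zk1 - zk).ofLp.2 = yk1 - yk := by rw [hzk, hzk1]; rfl
  have hinner : ⟪H' zk, zk1 - zk⟫ = ⟪p, xk1 - xk⟫ + ⟪q, yk1 - yk⟫ := by
    rw [WithLp.prod_inner_apply, hfst, hsnd]
  have hnormsq : ‖zk1 - zk‖ ^ 2 = ‖xk1 - xk‖ ^ 2 + ‖yk1 - yk‖ ^ 2 := by
    rw [WithLp.prod_norm_sq_eq_of_L2, ← hfst, ← hsnd]; rfl
  rw [hinner, hnormsq] at key3
  have hcm1 : (⟪p, xk1 - xk⟫ : ℝ) = ⟪xk1 - xk, p⟫ := real_inner_comm _ _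
  have hcm2 : (⟪q, yk1 - yk⟫ : ℝ) = ⟪yk1 - yk, q⟫ := real_inner_comm _ _
  rw [hcm1, hcm2] at key3
  -- combine
  have hc2 : γ * η ≤ c / 2 := by
    have h := mul_le_mul_of_nonneg_left (by rw [hη]; linarith [min_le_left lam₁ lam₂] : η ≤ lam₁ / 2) hγpos.le
    calc γ * η ≤ γ * (lam₁ / 2) := h
      _ ≤ c / 2 := by linarith
  have hd2 : γ * η ≤ d / 2 := by
    have h := mul_le_mul_of_nonneg_left (by rw [hη]; linarith [min_le_right lam₁ lam₂] : η ≤ lam₂ / 2) hγpos.le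
    calc γ * η ≤ γ * (lam₂ / 2) := h
      _ ≤ d / 2 := by linarith
  have A : γ * η * ‖xk1 - xk‖ ^ 2 ≤ c / 2 * ‖xk1 - xk‖ ^ 2 :=
    mul_le_mul_of_nonneg_right hc2 (by positivity)
  have B : γ * η * ‖yk1 - yk‖ ^ 2 ≤ d / 2 * ‖yk1 - yk‖ ^ 2 :=
    mul_le_mul_of_nonneg_right hd2 (by positivity)
  have e1 : (γ * η - L₅) * (‖xk1 - xk‖ ^ 2 + ‖yk1 - yk‖ ^ 2) =
      γ * η * ‖xk1 - xk‖ ^ 2 + γ * η * ‖yk1 - yk‖ ^ 2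
        - L₅ * (‖xk1 - xk‖ ^ 2 + ‖yk1 - yk‖ ^ 2) := by ring
  have C : L₅ / 2 * (‖xk1 - xk‖ ^ 2 + ‖yk1 - yk‖ ^ 2) ≤
      L₅ * (‖xk1 - xk‖ ^ 2 + ‖yk1 - yk‖ ^ 2) := by
    have h0 : 0 ≤ L₅ * (‖xk1 - xk‖ ^ 2 + ‖yk1 - yk‖ ^ 2) :=
      mul_nonneg hL₅0 (by positivity)
    linarith
  rw [hnormsq, e1]
  linarith [key1, key2, key3, A, B, C]
end

section
/- In the AAM method, if x^{k+1} minimizes x ↦ H(x, y^k) + f(x) + (c_k/2)‖x - x^k‖² and y^{k+1} minimizes y ↦ H(x^{k+1}, y) + g(y) + (d_k/2)‖y - y^k‖², then Ψ(z^k) - Ψ(z^{k+1}) ≥ (ρ₁/2)‖z^{k+1} - z^k‖², where ρ₁ = min{c_k, d_k} > 0, z^k = (x^k, y^k), and Ψ(x,y) = f(x) + H(x,y) + g(y). -/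
/-! Testing each subproblem at the previous iterate gives
`Ψ(x^{k+1}, y^k) + (c/2)‖x^{k+1} - x^k‖² ≤ Ψ(x^k, y^k)` and
`Ψ(x^{k+1}, y^{k+1}) + (d/2)‖y^{k+1} - y^k‖² ≤ Ψ(x^{k+1}, y^k)`;
adding them and using `ρ₁ ≤ c, d` gives the descent estimate. -/

theorem le_of_forall_prox_le {E : Type*} [SeminormedAddGroup E] (φ : E → ℝ) (c : ℝ)
    {x₀ x₁ : E} (hmin : ∀ x, φ x₁ + c / 2 * ‖x₁ - x₀‖ ^ 2 ≤ φ x + c / 2 * ‖x - x₀‖ ^ 2) :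
    φ x₁ + c / 2 * ‖x₁ - x₀‖ ^ 2 ≤ φ x₀ := by
  simpa using hmin x₀

theorem stmt_11_general {n₁ n₂ : ℕ}
    (f : EuclideanSpace ℝ (Fin n₁) → ℝ)
    (g : EuclideanSpace ℝ (Fin n₂) → ℝ)
    (H : EuclideanSpace ℝ (Fin n₁) → EuclideanSpace ℝ (Fin n₂) → ℝ)
    (c d ρ₁ : ℝ)
    (hρ₁ : ρ₁ ≤ min c d)
    (xk xk1 : EuclideanSpace ℝ (Fin n₁)) (yk yk1 : EuclideanSpace ℝ (Fin n₂))
    (hxmin : ∀ x, H xk1 yk + f xk1 + c / 2 * ‖xk1 - xk‖ ^ 2 ≤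
      H x yk + f x + c / 2 * ‖x - xk‖ ^ 2)
    (hymin : ∀ y, H xk1 yk1 + g yk1 + d / 2 * ‖yk1 - yk‖ ^ 2 ≤
      H xk1 y + g y + d / 2 * ‖y - yk‖ ^ 2) :
    ρ₁ / 2 * (‖xk1 - xk‖ ^ 2 + ‖yk1 - yk‖ ^ 2) ≤
      (f xk + H xk yk + g yk) - (f xk1 + H xk1 yk1 + g yk1) := by
  have hx := le_of_forall_prox_le (fun x ↦ H x yk + f x) c hxmin
  have hy := le_of_forall_prox_le (fun y ↦ H xk1 y + g y) d hymin
  have hc : ρ₁ * ‖xk1 - xk‖ ^ 2 ≤ c * ‖xk1 - xk‖ ^ 2 :=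
    mul_le_mul_of_nonneg_right (hρ₁.trans (min_le_left _ _)) (sq_nonneg _)
  have hd : ρ₁ * ‖yk1 - yk‖ ^ 2 ≤ d * ‖yk1 - yk‖ ^ 2 :=
    mul_le_mul_of_nonneg_right (hρ₁.trans (min_le_right _ _)) (sq_nonneg _)
  linarith

/-- Step 1 of Theorem 3 (AAM method): exact minimization of the two augmented subproblems gives
`Ψ(z^k) - Ψ(z^{k+1}) ≥ (ρ₁/2)‖z^{k+1} - z^k‖²` where `ρ₁ ≤ min{c_k, d_k}`. -/
theorem stmt_11 {n₁ n₂ : ℕ}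
    (f : EuclideanSpace ℝ (Fin n₁) → ℝ) (hflsc : LowerSemicontinuous f)
    (g : EuclideanSpace ℝ (Fin n₂) → ℝ) (hglsc : LowerSemicontinuous g)
    (H : EuclideanSpace ℝ (Fin n₁) → EuclideanSpace ℝ (Fin n₂) → ℝ)
    (c d ρ₁ : ℝ) (hcpos : 0 < c) (hdpos : 0 < d) (hρ₁pos : 0 < ρ₁)
    (hρ₁ : ρ₁ ≤ min c d)
    (xk xk1 : EuclideanSpace ℝ (Fin n₁)) (yk yk1 : EuclideanSpace ℝ (Fin n₂))
    (hxmin : ∀ x, H xk1 yk + f xk1 + c / 2 * ‖xk1 - xk‖ ^ 2 ≤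
      H x yk + f x + c / 2 * ‖x - xk‖ ^ 2)
    (hymin : ∀ y, H xk1 yk1 + g yk1 + d / 2 * ‖yk1 - yk‖ ^ 2 ≤
      H xk1 y + g y + d / 2 * ‖y - yk‖ ^ 2) :
    ρ₁ / 2 * (‖xk1 - xk‖ ^ 2 + ‖yk1 - yk‖ ^ 2) ≤
      (f xk + H xk yk + g yk) - (f xk1 + H xk1 yk1 + g yk1) :=
  stmt_11_general f g H c d ρ₁ hρ₁ xk xk1 yk yk1 hxmin hymin
end

section
/- Suppose Assumptions of Theorem 1 hold: f, g proper lsc convex bounded below, H continuously differentiable convex, ∇_x H(·,y) Lipschitz with constant L₁(y) where λ₁⁻ ≤ L₁(y^k) ≤ λ₁⁺ for all k, the AM-variant-I iterates satisfy x^{k+1} = prox_{c_k}^f(x^k - (1/c_k)∇_x H(x^k,y^k)) with c_k = γL₁(y^k), γ > 1, and y^{k+1} ∈ argmin_y{H(x^{k+1},y)+g(y)}, and ‖z^k - z*‖ ≤ R whenever Ψ(z^k) ≤ Ψ(z^0) for a minimizer z*. Then for all k ≥ 2: Ψ(z^k) - Ψ* ≤ max{ (1/2)^((k-1)/2)(Ψ(z^0)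 - Ψ*), 8(λ₁⁺)²R²γ²/(λ₁⁻(γ-1)(k-1)) }. -/
/-!
Each step decreases `Ψ` by at least `(γ - 1) λ₁⁻ / 2 ‖xᵏ⁺¹ - xᵏ‖²`: the proximal inequality
tested at `xᵏ` beats the descent lemma for `H(·, yᵏ)`. On the other hand, the first-order
optimality conditions of both block steps, combined with the convexity of `f`, `g` and `H`, bound
the gap `Ψ(zᵏ⁺¹) - Ψ*` by `γ λ₁⁺ R ‖xᵏ⁺¹ - xᵏ‖`. So the gaps satisfy
`Aₖ₊₁² ≤ C (Aₖ - Aₖ₊₁)`, and such a sequence at every step either halves or raises `1 / Aₖ` by at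
least `1 / (2C)`; whichever happens at least half of the time gives one branch of the maximum.
-/

open RealInnerProductSpace Filter Set Topology

lemma le_of_hasDerivAt_of_forall_le_sub {ψ : ℝ → ℝ} {D m : ℝ} (hψ : HasDerivAt ψ D 0)
    (h : ∀ t ∈ Ioc (0 : ℝ) 1, m * t ≤ ψ t - ψ 0) : m ≤ D := by
  have hslope : Tendsto (slope ψ 0) (𝓝[>] 0) (𝓝 D) :=
    hψ.tendsto_slope_zero_right.congr fun t => by simp [slope_def_field, div_eq_inv_mul]
  refine ge_of_tendsto hslope ?_
  filter_upwards [Ioc_mem_nhdsGT (zero_lt_one' ℝ)] with t ht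
  rw [slope_def_field, sub_zero, le_div_iff₀ ht.1]
  exact h t ht

def IsProxGradStep {X : Type*} [NormedAddCommGroup X] [NormedSpace ℝ X] (f : X → ℝ) (c : ℝ)
    (G x x' : X) : Prop :=
  ∀ u, f x' + c / 2 * ‖x' - (x - (1 / c) • G)‖ ^ 2 ≤ f u + c / 2 * ‖u - (x - (1 / c) • G)‖ ^ 2

section Gradient

variable {X : Type*} [NormedAddCommGroup X] [InnerProductSpace ℝ X] [CompleteSpace X]

lemma HasGradientAt.hasDerivAt_comp_line {h : X → ℝ} {G a v : X} {t : ℝ}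
    (hG : HasGradientAt h G (a + t • v)) : HasDerivAt (fun s : ℝ => h (a + s • v)) ⟪G, v⟫ t := by
  have hline : HasDerivAt (fun s : ℝ => a + s • v) v t := by
    simpa using ((hasDerivAt_id t).smul_const v).const_add a
  simpa [Function.comp_def] using hG.hasFDerivAt.comp_hasDerivAt t hline

lemma ConvexOn.inner_gradient_le_sub {h : X → ℝ} (hh : ConvexOn ℝ univ h) {G a : X}
    (hG : HasGradientAt h G a) (b : X) : ⟪G, b - a⟫ ≤ h b - h a := by
  let ℓ : ℝ →ᵃ[ℝ] X := AffineMap.lineMap a b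
  have hψ : HasDerivAt (h ∘ ℓ) ⟪G, b - a⟫ 0 := by
    have := (by simpa using hG : HasGradientAt h G (a + (0 : ℝ) • (b - a))).hasDerivAt_comp_line
    simpa [ℓ, Function.comp_def, AffineMap.lineMap_apply_module', add_comm] using this
  simpa [ℓ, slope_def_field] using
    (hh.comp_affineMap ℓ).le_slope_of_hasDerivAt trivial trivial one_pos hψ

lemma ConvexOn.sub_le_inner_gradient_of_forall_add_le {φ g : X → ℝ} (hg : ConvexOn ℝ univ g)
    {G u : X} (hφ : HasGradientAt φ G u) (hmin : ∀ w, φ u + g u ≤ φ w + g w) (v : X) :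
    g u - g v ≤ ⟪G, v - u⟫ := by
  refine le_of_hasDerivAt_of_forall_le_sub (ψ := fun t : ℝ => φ (u + t • (v - u)))
    (HasGradientAt.hasDerivAt_comp_line (by simpa using hφ)) fun t ht => ?_
  have hconv : g (u + t • (v - u)) ≤ (1 - t) * g u + t * g v := by
    rw [show u + t • (v - u) = (1 - t) • u + t • v by module]
    exact hg.2 (mem_univ u) (mem_univ v) (sub_nonneg.2 ht.2) ht.1.le (by ring)
  have := hmin (u + t • (v - u))
  simp only [zero_smul, add_zero]
  nlinarith

lemma le_add_inner_add_of_lipschitz_gradient {h : X → ℝ} {h' : X → X} {L : ℝ}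
    (hh : ∀ x, HasGradientAt h (h' x) x) (hL : ∀ a b, ‖h' a - h' b‖ ≤ L * ‖a - b‖) (a b : X) :
    h b ≤ h a + ⟪h' a, b - a⟫ + L / 2 * ‖b - a‖ ^ 2 := by
  set d := b - a
  let ψ : ℝ → ℝ := fun t => h (a + t • d) - t * ⟪h' a, d⟫ - L / 2 * ‖d‖ ^ 2 * t ^ 2
  have hψ : ∀ t, HasDerivAt ψ (⟪h' (a + t • d), d⟫ - ⟪h' a, d⟫ - L * ‖d‖ ^ 2 * t) t := by
    intro t
    have := (((hh _).hasDerivAt_comp_line (a := a) (v := d) (t := t)).sub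
      ((hasDerivAt_id t).mul_const ⟪h' a, d⟫)).sub
      ((hasDerivAt_pow 2 t).const_mul (L / 2 * ‖d‖ ^ 2))
    exact this.congr_deriv (by simp; ring)
  have hanti : AntitoneOn ψ (Icc 0 1) := by
    refine antitoneOn_of_hasDerivWithinAt_nonpos (convex_Icc 0 1)
      (fun t _ => (hψ t).continuousAt.continuousWithinAt)
      (fun t _ => (hψ t).hasDerivWithinAt) fun t ht => ?_
    rw [interior_Icc] at ht
    have hle : ⟪h' (a + t • d) - h' a, d⟫ ≤ L * ‖d‖ ^ 2 * t := calc
      _ ≤ ‖h' (a + t • d) - h' a‖ * ‖d‖ := real_inner_le_norm _ _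
      _ ≤ L * ‖t • d‖ * ‖d‖ := by
        gcongr
        simpa using hL (a + t • d) a
      _ = L * ‖d‖ ^ 2 * t := by rw [norm_smul, Real.norm_of_nonneg ht.1.le]; ring
    rw [inner_sub_left] at hle
    linarith
  have := hanti (left_mem_Icc.2 zero_le_one) (right_mem_Icc.2 zero_le_one) zero_le_one
  simp [ψ, d] at this
  linarith

lemma hasGradientAt_half_mul_norm_sub_sq (c : ℝ) (p u : X) :
    HasGradientAt (fun w => c / 2 * ‖w - p‖ ^ 2) (c • (u - p)) u := by
  rw [hasGradientAt_iff_hasFDerivAt]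
  refine (((hasStrictFDerivAt_norm_sq (u - p)).hasFDerivAt.comp u
    ((hasFDerivAt_id u).sub_const p)).const_mul (c / 2)).congr_fderiv ?_
  ext v
  simp
  ring

lemma ConvexOn.le_add_inner_of_isProxGradStep {f : X → ℝ} (hf : ConvexOn ℝ univ f) {c : ℝ}
    (hc : c ≠ 0) {G x x' : X} (hprox : IsProxGradStep f c G x x') (s : X) :
    f x' ≤ f s + c * ⟪x' - x, s - x'⟫ + ⟪G, s - x'⟫ := by
  have h := hf.sub_le_inner_gradient_of_forall_add_le
    (hasGradientAt_half_mul_norm_sub_sq c (x - (1 / c) • G) x') (fun w => by linarith [hprox w]) s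
  rw [show c • (x' - (x - (1 / c) • G)) = c • (x' - x) + G by
    rw [smul_sub, smul_sub, smul_smul, mul_one_div_cancel hc, one_smul, smul_sub]; abel,
    inner_add_left, real_inner_smul_left] at h
  linarith

end Gradient

section Partial

variable {E F : Type*} [NormedAddCommGroup E] [InnerProductSpace ℝ E] [CompleteSpace E]
  [NormedAddCommGroup F] [InnerProductSpace ℝ F] [CompleteSpace F]
  {H : WithLp 2 (E × F) → ℝ} {G : WithLp 2 (E × F)} {x : E} {y : F}

lemma HasGradientAt.partial_fst (hG : HasGradientAt H G (WithLp.toLp 2 (x, y))) :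
    HasGradientAt (fun u => H (WithLp.toLp 2 (u, y))) G.ofLp.1 x := by
  have hin : HasFDerivAt (fun u : E => WithLp.toLp 2 (u, y))
      ((WithLp.prodContinuousLinearEquiv 2 ℝ E F).symm.toContinuousLinearMap ∘L
        ContinuousLinearMap.inl ℝ E F) x :=
    (WithLp.prodContinuousLinearEquiv 2 ℝ E F).symm.hasFDerivAt.comp x
      ((hasFDerivAt_id x).prodMk (hasFDerivAt_const y x))
  rw [hasGradientAt_iff_hasFDerivAt] at hG ⊢
  refine (hG.comp x hin).congr_fderiv ?_
  ext v
  simp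

lemma HasGradientAt.partial_snd (hG : HasGradientAt H G (WithLp.toLp 2 (x, y))) :
    HasGradientAt (fun v => H (WithLp.toLp 2 (x, v))) G.ofLp.2 y := by
  have hin : HasFDerivAt (fun v : F => WithLp.toLp 2 (x, v))
      ((WithLp.prodContinuousLinearEquiv 2 ℝ E F).symm.toContinuousLinearMap ∘L
        ContinuousLinearMap.inr ℝ E F) y :=
    (WithLp.prodContinuousLinearEquiv 2 ℝ E F).symm.hasFDerivAt.comp y
      ((hasFDerivAt_const x y).prodMk (hasFDerivAt_id y))
  rw [hasGradientAt_iff_hasFDerivAt] at hG ⊢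
  refine (hG.comp y hin).congr_fderiv ?_
  ext v
  simp

end Partial

section AlternatingMinimization

variable {E F : Type*} [NormedAddCommGroup E] [InnerProductSpace ℝ E] [CompleteSpace E]
  [NormedAddCommGroup F] [InnerProductSpace ℝ F] [CompleteSpace F]
  {f : E → ℝ} {g : F → ℝ} {H : WithLp 2 (E × F) → ℝ} {H' : WithLp 2 (E × F) → WithLp 2 (E × F)}
  {Ψ : WithLp 2 (E × F) → ℝ} {L c : ℝ} {x x' : E} {y y' : F}

lemma alternating_step_sufficient_decrease (hf : ConvexOn ℝ univ f)
    (hdiff : ∀ z, HasGradientAt H (H' z) z)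
    (hlip : ∀ x₁ x₂, ‖(H' (WithLp.toLp 2 (x₁, y))).ofLp.1 - (H' (WithLp.toLp 2 (x₂, y))).ofLp.1‖ ≤
      L * ‖x₁ - x₂‖)
    (hΨ : ∀ w, Ψ w = f w.ofLp.1 + H w + g w.ofLp.2) (hc : c ≠ 0)
    (hprox : IsProxGradStep f c (H' (WithLp.toLp 2 (x, y))).ofLp.1 x x')
    (hy' : ∀ v, H (WithLp.toLp 2 (x', y')) + g y' ≤ H (WithLp.toLp 2 (x', v)) + g v) :
    Ψ (WithLp.toLp 2 (x', y')) + (c - L / 2) * ‖x' - x‖ ^ 2 ≤ Ψ (WithLp.toLp 2 (x, y)) := by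
  have hfx := hf.le_add_inner_of_isProxGradStep hc hprox x
  have hHx := le_add_inner_add_of_lipschitz_gradient (fun u => (hdiff _).partial_fst) hlip x x'
  rw [← neg_sub x', inner_neg_right, inner_neg_right, real_inner_self_eq_norm_sq] at hfx
  simp only [hΨ]
  linarith [hy' y]

lemma alternating_step_sub_le_mul_norm (hf : ConvexOn ℝ univ f) (hg : ConvexOn ℝ univ g)
    (hH : ConvexOn ℝ univ H) (hdiff : ∀ z, HasGradientAt H (H' z) z)
    (hlip : ∀ x₁ x₂, ‖(H' (WithLp.toLp 2 (x₁, y))).ofLp.1 - (H' (WithLp.toLp 2 (x₂, y))).ofLp.1‖ ≤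
      L * ‖x₁ - x₂‖)
    (hΨ : ∀ w, Ψ w = f w.ofLp.1 + H w + g w.ofLp.2) (hc : 0 < c) (hLc : L ≤ 2 * c)
    (hy : ∀ v, H (WithLp.toLp 2 (x, y)) + g y ≤ H (WithLp.toLp 2 (x, v)) + g v)
    (hprox : IsProxGradStep f c (H' (WithLp.toLp 2 (x, y))).ofLp.1 x x')
    (hy' : ∀ v, H (WithLp.toLp 2 (x', y')) + g y' ≤ H (WithLp.toLp 2 (x', v)) + g v)
    (w : WithLp 2 (E × F)) :
    Ψ (WithLp.toLp 2 (x', y')) - Ψ w ≤ c * ‖x' - x‖ * ‖w.ofLp.1 - x‖ := by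
  set G := H' (WithLp.toLp 2 (x, y))
  have hfx := hf.le_add_inner_of_isProxGradStep hc.ne' hprox w.ofLp.1
  have hHx := le_add_inner_add_of_lipschitz_gradient (fun u => (hdiff _).partial_fst) hlip x x'
  have hHw := hH.inner_gradient_le_sub (hdiff (WithLp.toLp 2 (x, y))) w
  have hgw := hg.sub_le_inner_gradient_of_forall_add_le (hdiff _).partial_snd hy w.ofLp.2
  have hsplit : ⟪G.ofLp.1, w.ofLp.1 - x'⟫ + ⟪G.ofLp.1, x' - x⟫ = ⟪G.ofLp.1, w.ofLp.1 - x⟫ := by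
    rw [← inner_add_right, sub_add_sub_cancel]
  have hprod : ⟪x' - x, w.ofLp.1 - x'⟫ ≤ ‖x' - x‖ * ‖w.ofLp.1 - x‖ - ‖x' - x‖ ^ 2 := by
    rw [← sub_sub_sub_cancel_right w.ofLp.1 x' x, inner_sub_right, real_inner_self_eq_norm_sq]
    linarith [real_inner_le_norm (x' - x) (w.ofLp.1 - x)]
  simp only [WithLp.prod_inner_apply, WithLp.ofLp_sub, Prod.fst_sub, Prod.snd_sub] at hHw
  simp only [hΨ]
  nlinarith [hy' y, mul_le_mul_of_nonneg_left hprod hc.le, sq_nonneg ‖x' - x‖]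

end AlternatingMinimization

lemma rate_of_sq_le_mul_sub (A : ℕ → ℝ) (C : ℝ) (hC : 0 ≤ C) (hA : ∀ k, 0 ≤ A k)
    (hrec : ∀ k, A (k + 1) ^ 2 ≤ C * (A k - A (k + 1))) (k : ℕ) :
    A k ≤ max ((1 / 2 : ℝ) ^ ((k : ℝ) / 2) * A 0) (4 * C / k) := by
  have hanti : ∀ k, A (k + 1) ≤ A k := fun k => by nlinarith [hrec k, hA k]
  have key : ∃ p q : ℕ, p + q = k ∧ A k ≤ (1 / 2 : ℝ) ^ p * A 0 ∧ q * A k ≤ 2 * C := by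
    induction k with
    | zero => exact ⟨0, 0, rfl, by simp, by simpa using hC⟩
    | succ k ih =>
      obtain ⟨p, q, hpq, hp, hq⟩ := ih
      by_cases hhalf : A (k + 1) ≤ A k / 2
      · refine ⟨p + 1, q, by omega, by rw [pow_succ]; linarith, ?_⟩
        nlinarith [hanti k, hA (k + 1), (Nat.cast_nonneg q : (0 : ℝ) ≤ q)]
      · refine ⟨p, q + 1, by omega, (hanti k).trans hp, ?_⟩
        rw [not_le] at hhalf
        have hpos : 0 < A (k + 1) := by linarith [hA k]
        push_cast
        nlinarith [hrec k, mul_le_mul_of_nonneg_right hq (hA (k + 1)), mul_pos hpos hpos,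
          mul_le_mul_of_nonneg_left (hanti k) (Nat.cast_nonneg q : (0 : ℝ) ≤ q)]
  obtain ⟨p, q, hpq, hp, hq⟩ := key
  have hpq' : (p : ℝ) + q = k := by exact_mod_cast hpq
  rcases le_or_gt ((k : ℝ) / 2) p with hkp | hkp
  · refine le_max_of_le_left (hp.trans (mul_le_mul_of_nonneg_right ?_ (hA 0)))
    rw [← Real.rpow_natCast]
    exact Real.rpow_le_rpow_of_exponent_ge (by norm_num) (by norm_num) hkp
  · refine le_max_of_le_right ?_
    have hk : (0 : ℝ) < k := by linarith [(Nat.cast_nonneg p : (0 : ℝ) ≤ p)]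
    rw [le_div_iff₀ hk]
    nlinarith [hA k]

lemma rate_of_le_mul_of_mul_sq_le (A δ : ℕ → ℝ) {K m : ℝ} (hm : 0 < m) (hA : ∀ k, 0 ≤ A k)
    (hgap : ∀ k, A (k + 1) ≤ K * δ k) (hdec : ∀ k, m * δ k ^ 2 ≤ A k - A (k + 1)) (k : ℕ) :
    A k ≤ max ((1 / 2 : ℝ) ^ ((k : ℝ) / 2) * A 0) (4 * K ^ 2 / (m * k)) := by
  have hrec k : A (k + 1) ^ 2 ≤ K ^ 2 / m * (A k - A (k + 1)) := calc
    A (k + 1) ^ 2 ≤ (K * δ k) ^ 2 := pow_le_pow_left₀ (hA _) (hgap k) 2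
    _ = K ^ 2 / m * (m * δ k ^ 2) := by field_simp
    _ ≤ K ^ 2 / m * (A k - A (k + 1)) := mul_le_mul_of_nonneg_left (hdec k) (by positivity)
  convert rate_of_sq_le_mul_sub A _ (by positivity) hA hrec k using 2
  ring

theorem stmt_12_general {n₁ n₂ : ℕ}
    (f : EuclideanSpace ℝ (Fin n₁) → ℝ)
    (hfconv : ConvexOn ℝ Set.univ f)
    (g : EuclideanSpace ℝ (Fin n₂) → ℝ)
    (hgconv : ConvexOn ℝ Set.univ g)
    (H : WithLp 2 (EuclideanSpace ℝ (Fin n₁) × EuclideanSpace ℝ (Fin n₂)) → ℝ)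
    (hHconv : ConvexOn ℝ Set.univ H)
    (H' : WithLp 2 (EuclideanSpace ℝ (Fin n₁) × EuclideanSpace ℝ (Fin n₂)) →
      WithLp 2 (EuclideanSpace ℝ (Fin n₁) × EuclideanSpace ℝ (Fin n₂)))
    (hdiff : ∀ z, HasGradientAt H (H' z) z)
    -- Lipschitz continuity of the partial gradient `∇ₓH(·, y)` with constant `L₁ y`
    (L₁ : EuclideanSpace ℝ (Fin n₂) → ℝ)
    (hlip : ∀ (y : EuclideanSpace ℝ (Fin n₂)) (x₁ x₂ : EuclideanSpace ℝ (Fin n₁)),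
      ‖(H' (WithLp.toLp 2 (x₁, y))).ofLp.1 - (H' (WithLp.toLp 2 (x₂, y))).ofLp.1‖ ≤ L₁ y * ‖x₁ - x₂‖)
    -- the iterates and the objective
    (x : ℕ → EuclideanSpace ℝ (Fin n₁)) (y : ℕ → EuclideanSpace ℝ (Fin n₂))
    (z : ℕ → WithLp 2 (EuclideanSpace ℝ (Fin n₁) × EuclideanSpace ℝ (Fin n₂)))
    (hz : ∀ k, z k = WithLp.toLp 2 (x k, y k))
    (Ψ : WithLp 2 (EuclideanSpace ℝ (Fin n₁) × EuclideanSpace ℝ (Fin n₂)) → ℝ)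
    (hΨ : ∀ w, Ψ w = f w.ofLp.1 + H w + g w.ofLp.2)
    (lam₁m lam₁p : ℝ) (hlam₁m : 0 < lam₁m)
    (hbound : ∀ k, lam₁m ≤ L₁ (y k) ∧ L₁ (y k) ≤ lam₁p)
    (γ : ℝ) (hγ : 1 < γ) (c : ℕ → ℝ) (hc : ∀ k, c k = γ * L₁ (y k))
    (hproxx : ∀ k, ∀ u, f (x (k + 1)) +
        c k / 2 * ‖x (k + 1) - (x k - (1 / c k) • (H' (z k)).ofLp.1)‖ ^ 2 ≤
      f u + c k / 2 * ‖u - (x k - (1 / c k) • (H' (z k)).ofLp.1)‖ ^ 2)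
    (hymin : ∀ k, ∀ v, H (WithLp.toLp 2 (x (k + 1), y (k + 1))) + g (y (k + 1)) ≤ H (WithLp.toLp 2 (x (k + 1), v)) + g v)
    -- the optimal point and level-set radius
    (zstar : WithLp 2 (EuclideanSpace ℝ (Fin n₁) × EuclideanSpace ℝ (Fin n₂)))
    (hopt : ∀ w, Ψ zstar ≤ Ψ w)
    (R : ℝ) (hR : ∀ k, Ψ (z k) ≤ Ψ (z 0) → ‖z k - zstar‖ ≤ R) :
    ∀ k : ℕ, 2 ≤ k → Ψ (z k) - Ψ zstar ≤
      max (((1 : ℝ) / 2) ^ (((k : ℝ) - 1) / 2) * (Ψ (z 0) - Ψ zstar))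
        (8 * lam₁p ^ 2 * R ^ 2 * γ ^ 2 / (lam₁m * (γ - 1) * ((k : ℝ) - 1))) := by
  simp only [hz] at hproxx hR ⊢
  have hL k : 0 < L₁ (y k) := hlam₁m.trans_le (hbound k).1
  have hlam₁p : 0 ≤ lam₁p := hlam₁m.le.trans ((hbound 0).1.trans (hbound 0).2)
  have hcpos k : 0 < c k := hc k ▸ mul_pos (by linarith) (hL k)
  have hcoef k : (γ - 1) * lam₁m / 2 ≤ c k - L₁ (y k) / 2 := by
    nlinarith [hc k, (hbound k).1, hL k]
  have hdec k := alternating_step_sufficient_decrease hfconv hdiff (hlip (y k)) hΨ (hcpos k).ne'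
    (hproxx k) (hymin k)
  have hm : 0 < (γ - 1) * lam₁m / 2 := by nlinarith
  have hanti : Antitone fun k => Ψ (WithLp.toLp 2 (x k, y k)) :=
    antitone_nat_of_succ_le fun k => by nlinarith [hdec k, hcoef k, sq_nonneg ‖x (k + 1) - x k‖]
  have hxR k : ‖zstar.ofLp.1 - x k‖ ≤ R := by
    rw [norm_sub_rev]
    exact (WithLp.norm_fst_le _ _).trans (hR k (hanti (Nat.zero_le k)))
  have hgap k : Ψ (WithLp.toLp 2 (x (k + 2), y (k + 2))) - Ψ zstar ≤
      γ * lam₁p * R * ‖x (k + 2) - x (k + 1)‖ := by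
    refine (alternating_step_sub_le_mul_norm hfconv hgconv hHconv hdiff (hlip (y (k + 1))) hΨ
      (hcpos (k + 1)) (by linarith [hcoef (k + 1)]) (hymin k) (hproxx (k + 1))
      (hymin (k + 1)) zstar).trans ?_
    rw [hc, mul_right_comm _ R]
    gcongr
    exacts [(hbound _).2, hxR _]
  intro k hk
  obtain ⟨j, rfl⟩ : ∃ j, k = j + 1 := ⟨k - 1, by omega⟩
  have hrate := rate_of_le_mul_of_mul_sq_le
    (fun j => Ψ (WithLp.toLp 2 (x (j + 1), y (j + 1))) - Ψ zstar)
    (fun j => ‖x (j + 2) - x (j + 1)‖) hm (fun j => sub_nonneg.2 (hopt _)) hgap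
    (fun j => by nlinarith [hdec (j + 1), hcoef (j + 1), sq_nonneg ‖x (j + 2) - x (j + 1)‖]) j
  refine hrate.trans (max_le_max ?_ (le_of_eq ?_))
  · push_cast
    rw [add_sub_cancel_right]
    exact mul_le_mul_of_nonneg_left (sub_le_sub_right (hanti (Nat.zero_le 1)) _) (by positivity)
  · push_cast
    field_simp
    ring

/-- Theorem 1: sublinear rate of convergence of AM-variant-I. -/
theorem stmt_12 {n₁ n₂ : ℕ}
    (f : EuclideanSpace ℝ (Fin n₁) → ℝ)
    (hfconv : ConvexOn ℝ Set.univ f) (hflsc : LowerSemicontinuous f)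
    (hfbdd : BddBelow (Set.range f))
    (g : EuclideanSpace ℝ (Fin n₂) → ℝ)
    (hgconv : ConvexOn ℝ Set.univ g) (hglsc : LowerSemicontinuous g)
    (hgbdd : BddBelow (Set.range g))
    (H : WithLp 2 (EuclideanSpace ℝ (Fin n₁) × EuclideanSpace ℝ (Fin n₂)) → ℝ)
    (hHconv : ConvexOn ℝ Set.univ H)
    (H' : WithLp 2 (EuclideanSpace ℝ (Fin n₁) × EuclideanSpace ℝ (Fin n₂)) →
      WithLp 2 (EuclideanSpace ℝ (Fin n₁) × EuclideanSpace ℝ (Fin n₂)))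
    (hdiff : ∀ z, HasGradientAt H (H' z) z)
    -- Lipschitz continuity of the partial gradient `∇ₓH(·, y)` with constant `L₁ y`
    (L₁ : EuclideanSpace ℝ (Fin n₂) → ℝ)
    (hlip : ∀ (y : EuclideanSpace ℝ (Fin n₂)) (x₁ x₂ : EuclideanSpace ℝ (Fin n₁)),
      ‖(H' (WithLp.toLp 2 (x₁, y))).ofLp.1 - (H' (WithLp.toLp 2 (x₂, y))).ofLp.1‖ ≤ L₁ y * ‖x₁ - x₂‖)
    -- the iterates and the objective
    (x : ℕ → EuclideanSpace ℝ (Fin n₁)) (y : ℕ → EuclideanSpace ℝ (Fin n₂))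
    (z : ℕ → WithLp 2 (EuclideanSpace ℝ (Fin n₁) × EuclideanSpace ℝ (Fin n₂)))
    (hz : ∀ k, z k = WithLp.toLp 2 (x k, y k))
    (Ψ : WithLp 2 (EuclideanSpace ℝ (Fin n₁) × EuclideanSpace ℝ (Fin n₂)) → ℝ)
    (hΨ : ∀ w, Ψ w = f w.ofLp.1 + H w + g w.ofLp.2)
    (lam₁m lam₁p : ℝ) (hlam₁m : 0 < lam₁m)
    (hbound : ∀ k, lam₁m ≤ L₁ (y k) ∧ L₁ (y k) ≤ lam₁p)
    (γ : ℝ) (hγ : 1 < γ) (c : ℕ → ℝ) (hc : ∀ k, c k = γ * L₁ (y k))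
    (hproxx : ∀ k, ∀ u, f (x (k + 1)) +
        c k / 2 * ‖x (k + 1) - (x k - (1 / c k) • (H' (z k)).ofLp.1)‖ ^ 2 ≤
      f u + c k / 2 * ‖u - (x k - (1 / c k) • (H' (z k)).ofLp.1)‖ ^ 2)
    (hymin : ∀ k, ∀ v, H (WithLp.toLp 2 (x (k + 1), y (k + 1))) + g (y (k + 1)) ≤ H (WithLp.toLp 2 (x (k + 1), v)) + g v)
    -- the optimal point and level-set radius
    (zstar : WithLp 2 (EuclideanSpace ℝ (Fin n₁) × EuclideanSpace ℝ (Fin n₂)))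
    (hopt : ∀ w, Ψ zstar ≤ Ψ w)
    (R : ℝ) (hR : ∀ k, Ψ (z k) ≤ Ψ (z 0) → ‖z k - zstar‖ ≤ R) :
    ∀ k : ℕ, 2 ≤ k → Ψ (z k) - Ψ zstar ≤
      max (((1 : ℝ) / 2) ^ (((k : ℝ) - 1) / 2) * (Ψ (z 0) - Ψ zstar))
        (8 * lam₁p ^ 2 * R ^ 2 * γ ^ 2 / (lam₁m * (γ - 1) * ((k : ℝ) - 1))) :=
  stmt_12_general f hfconv g hgconv H hHconv H' hdiff L₁ hlip x y z hz Ψ hΨ lam₁m lam₁p hlam₁m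
    hbound γ hγ c hc hproxx hymin zstar hopt R hR
end

section
/- If H is convex and continuously differentiable with ∇H Lipschitz of constant L₅, and x^{k+1}, y^{k+1} satisfy the first-order prox inequalities f(x^k) ≥ f(x^{k+1}) + (c_k/2)‖x^{k+1}-x^k‖² + ⟨x^{k+1}-x^k, ∇_x H(z^k)⟩ and g(y^k) ≥ g(y^{k+1}) + (d_k/2)‖y^{k+1}-y^k‖² + ⟨y^{k+1}-y^k, ∇_y H(z^k)⟩, then Ψ(z^k) - Ψ(z^{k+1}) ≥ (c_k/2)‖x^{k+1}-x^k‖² + (d_k/2)‖y^{k+1}-y^k‖² - L₅‖z^{k+1}-z^k‖². -/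
/-!
Convexity of `H` at `z^{k+1}` bounds `H(z^k) - H(z^{k+1})` below by `⟨∇H(z^{k+1}), z^k - z^{k+1}⟩`,
while the two prox inequalities are linearized at `z^k`. Adding them, the gradients at `z^k` and
`z^{k+1}` meet in `⟨z^{k+1} - z^k, ∇H(z^{k+1}) - ∇H(z^k)⟩`, which Cauchy–Schwarz and the Lipschitz
bound on `∇H` control by `L₅‖z^{k+1} - z^k‖²`.
-/

open RealInnerProductSpace

theorem ConvexOn.add_inner_gradient_le {E : Type*} [NormedAddCommGroup E] [InnerProductSpace ℝ E]
    [CompleteSpace E] {H : E → ℝ} (hconv : ConvexOn ℝ Set.univ H) {w g : E}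
    (hw : HasGradientAt H g w) (z : E) :
    H w + ⟪g, z - w⟫ ≤ H z := by
  set ℓ := AffineMap.lineMap (k := ℝ) w z
  have hφ : ConvexOn ℝ Set.univ (H ∘ ℓ) := hconv.comp_affineMap ℓ
  have hφ' : HasDerivAt (H ∘ ℓ) ⟪g, z - w⟫ 0 := by
    have := hw.hasFDerivAt
    rw [← AffineMap.lineMap_apply_zero (k := ℝ) w z] at this
    simpa using this.comp_hasDerivAt 0 AffineMap.hasDerivAt_lineMap
  have := hφ.le_slope_of_hasDerivAt (Set.mem_univ 0) (Set.mem_univ 1) one_pos hφ'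
  simp only [slope_def_field, Function.comp_apply, AffineMap.lineMap_apply_one,
    AffineMap.lineMap_apply_zero, sub_zero, div_one, ℓ] at this
  linarith

theorem real_inner_le_mul_norm_sq_of_norm_le {E : Type*} [NormedAddCommGroup E]
    [InnerProductSpace ℝ E] {u v : E} {L : ℝ} (h : ‖v‖ ≤ L * ‖u‖) :
    ⟪u, v⟫ ≤ L * ‖u‖ ^ 2 :=
  calc ⟪u, v⟫ ≤ ‖u‖ * ‖v‖ := real_inner_le_norm u v
    _ ≤ ‖u‖ * (L * ‖u‖) := mul_le_mul_of_nonneg_left h (norm_nonneg u)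
    _ = L * ‖u‖ ^ 2 := by ring

/-- Inequalities (36)–(41) of Theorem 2: combining the two first-order prox inequalities with
convexity of `H` and the `L₅`-Lipschitz continuity of `∇H` gives
`Ψ(z^k) - Ψ(z^{k+1}) ≥ (c_k/2)‖x^{k+1}-x^k‖² + (d_k/2)‖y^{k+1}-y^k‖² - L₅‖z^{k+1}-z^k‖²`. -/
theorem stmt_19 {n₁ n₂ : ℕ}
    (f : EuclideanSpace ℝ (Fin n₁) → ℝ)
    (g : EuclideanSpace ℝ (Fin n₂) → ℝ)
    (H : WithLp 2 (EuclideanSpace ℝ (Fin n₁) × EuclideanSpace ℝ (Fin n₂)) → ℝ)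
    (hHconv : ConvexOn ℝ Set.univ H)
    (H' : WithLp 2 (EuclideanSpace ℝ (Fin n₁) × EuclideanSpace ℝ (Fin n₂)) →
      WithLp 2 (EuclideanSpace ℝ (Fin n₁) × EuclideanSpace ℝ (Fin n₂)))
    (hdiff : ∀ z, HasGradientAt H (H' z) z)
    (L₅ : ℝ) (hL₅lip : ∀ z w, ‖H' z - H' w‖ ≤ L₅ * ‖z - w‖)
    (c d : ℝ)
    (xk xk1 : EuclideanSpace ℝ (Fin n₁)) (yk yk1 : EuclideanSpace ℝ (Fin n₂))
    (zk zk1 : WithLp 2 (EuclideanSpace ℝ (Fin n₁) × EuclideanSpace ℝ (Fin n₂)))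
    (hzk : zk = WithLp.toLp 2 (xk, yk)) (hzk1 : zk1 = WithLp.toLp 2 (xk1, yk1))
    (hineqx : f xk1 + c / 2 * ‖xk1 - xk‖ ^ 2 + ⟪xk1 - xk, (H' zk).ofLp.1⟫ ≤ f xk)
    (hineqy : g yk1 + d / 2 * ‖yk1 - yk‖ ^ 2 + ⟪yk1 - yk, (H' zk).ofLp.2⟫ ≤ g yk) :
    c / 2 * ‖xk1 - xk‖ ^ 2 + d / 2 * ‖yk1 - yk‖ ^ 2 - L₅ * ‖zk1 - zk‖ ^ 2 ≤
      (f xk + H zk + g yk) - (f xk1 + H zk1 + g yk1) := by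
  have hconv : H zk1 - ⟪zk1 - zk, H' zk1⟫ ≤ H zk := by
    have := hHconv.add_inner_gradient_le (hdiff zk1) zk
    rwa [real_inner_comm, ← neg_sub, inner_neg_left, ← sub_eq_add_neg] at this
  have hlip : ⟪zk1 - zk, H' zk1 - H' zk⟫ ≤ L₅ * ‖zk1 - zk‖ ^ 2 :=
    real_inner_le_mul_norm_sq_of_norm_le (hL₅lip zk1 zk)
  have hsplit : ⟪zk1 - zk, H' zk⟫ = ⟪xk1 - xk, (H' zk).ofLp.1⟫ + ⟪yk1 - yk, (H' zk).ofLp.2⟫ := by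
    rw [WithLp.prod_inner_apply, hzk, hzk1]
    rfl
  rw [inner_sub_right] at hlip
  linarith
end
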